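/- Let g be even, g ≥ 2, and let (ℤ, d_g) be the metric space on the integers with word metric induced by A_g = {0} ∪ {±gⁱ : i ≥ 0}. For every integer n there exists k ≥ 0 such that ℓ_g(n + gᵏ) = ℓ_g(n) + 1 or ℓ_g(n − gᵏ) = ℓ_g(n) + 1. -/

import Mathlib

def Ag (g : ℤ) : Set ℤ := {0} ∪ {x | ∃ i : ℕ, x = g ^ i ∨ x = -g ^ i}

noncomputable def lg (g : ℤ) (n : ℤ) : ℕ :=
  sInf {h | ∃ l : List ℤ, (∀ a ∈ l, a ∈ Ag g) ∧ l.sum = n ∧ l.length = h}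

/-! A word of `A_g`-length `ℓ` for `n + g ^ K` splits into its `±1` letters, summing to some `d`,
and the other letters, which are `g` times letters and so spell a multiple `g * s` of length
`ℓ_g(s)` at most. Writing `n = d + g * n'` with `n' = s - g ^ (K - 1)` and inducting on `K`
shows that for `K > |n|` the word is longer than `ℓ_g(n)`; the power `g ^ K` is too large to be
absorbed by the `±1` letters alone. Hence `ℓ_g(n + g ^ K) = ℓ_g(n) + 1` for every `K > |n|`. -/

section Ag

variable (g : ℤ)

lemma zero_mem_Ag : (0 : ℤ) ∈ Ag g := Or.inl rfl

lemma pow_mem_Ag (i : ℕ) : g ^ i ∈ Ag g := Or.inr ⟨i, Or.inl rfl⟩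

lemma neg_pow_mem_Ag (i : ℕ) : -g ^ i ∈ Ag g := Or.inr ⟨i, Or.inr rfl⟩

lemma one_mem_Ag : (1 : ℤ) ∈ Ag g := by simpa using pow_mem_Ag g 0

lemma neg_one_mem_Ag : (-1 : ℤ) ∈ Ag g := by simpa using neg_pow_mem_Ag g 0

variable {g}

lemma mul_mem_Ag {a : ℤ} (ha : a ∈ Ag g) : g * a ∈ Ag g := by
  rcases ha with rfl | ⟨i, rfl | rfl⟩
  · simpa using zero_mem_Ag g
  · simpa [pow_succ'] using pow_mem_Ag g (i + 1)
  · simpa [pow_succ'] using neg_pow_mem_Ag g (i + 1)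

lemma eq_one_or_eq_neg_one_or_exists_eq_mul_of_mem_Ag {a : ℤ} (ha : a ∈ Ag g) :
    a = 1 ∨ a = -1 ∨ ∃ b ∈ Ag g, a = g * b := by
  rcases ha with rfl | ⟨_ | i, rfl | rfl⟩
  · exact Or.inr (Or.inr ⟨0, zero_mem_Ag g, by simp⟩)
  · simp
  · simp
  · exact Or.inr (Or.inr ⟨g ^ i, pow_mem_Ag g i, by ring⟩)
  · exact Or.inr (Or.inr ⟨-g ^ i, neg_pow_mem_Ag g i, by ring⟩)

end Ag

section lg

variable {g : ℤ}

lemma lg_le_length {l : List ℤ} (hl : ∀ a ∈ l, a ∈ Ag g) : lg g l.sum ≤ l.length :=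
  Nat.sInf_le ⟨l, hl, rfl, rfl⟩

lemma exists_list_sum_eq_natAbs (g n : ℤ) :
    ∃ l : List ℤ, (∀ a ∈ l, a ∈ Ag g) ∧ l.sum = n ∧ l.length = n.natAbs := by
  refine ⟨List.replicate n.natAbs (if 0 ≤ n then 1 else -1), ?_, ?_, by simp⟩
  · intro a ha
    rw [List.eq_of_mem_replicate ha]
    split
    exacts [one_mem_Ag g, neg_one_mem_Ag g]
  · rw [List.sum_replicate]
    split <;> simp only [nsmul_eq_mul, mul_one, mul_neg_one] <;> omega

lemma exists_list_length_eq_lg (g n : ℤ) :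
    ∃ l : List ℤ, (∀ a ∈ l, a ∈ Ag g) ∧ l.sum = n ∧ l.length = lg g n := by
  obtain ⟨l, hl⟩ := exists_list_sum_eq_natAbs g n
  exact Nat.sInf_mem (s := {h | ∃ l : List ℤ, (∀ a ∈ l, a ∈ Ag g) ∧ l.sum = n ∧ l.length = h})
    ⟨_, l, hl⟩

lemma lg_le_natAbs (g n : ℤ) : lg g n ≤ n.natAbs := by
  obtain ⟨l, hl, rfl, hlen⟩ := exists_list_sum_eq_natAbs g n
  exact hlen ▸ lg_le_length hl

lemma eq_zero_of_lg_eq_zero (g n : ℤ) (h : lg g n = 0) : n = 0 := by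
  obtain ⟨l, -, rfl, hl⟩ := exists_list_length_eq_lg g n
  simp [List.length_eq_zero_iff.mp (hl.trans h)]

lemma lg_le_one_of_mem {a : ℤ} (ha : a ∈ Ag g) : lg g a ≤ 1 := by
  simpa using lg_le_length (l := [a]) (by simpa using ha)

lemma lg_add_le (g m n : ℤ) : lg g (m + n) ≤ lg g m + lg g n := by
  obtain ⟨l₁, hl₁, rfl, hlen₁⟩ := exists_list_length_eq_lg g m
  obtain ⟨l₂, hl₂, rfl, hlen₂⟩ := exists_list_length_eq_lg g n
  have := lg_le_length (l := l₁ ++ l₂) (by simpa [or_imp, forall_and] using ⟨hl₁, hl₂⟩)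
  simp_all

lemma lg_mul_le (g m : ℤ) : lg g (g * m) ≤ lg g m := by
  obtain ⟨l, hl, rfl, hlen⟩ := exists_list_length_eq_lg g m
  have := lg_le_length (l := l.map (g * ·)) (by simpa using fun a ha => mul_mem_Ag (hl a ha))
  rwa [List.sum_map_mul_left (f := fun x => x), List.map_id', List.length_map, hlen] at this

lemma lg_add_pow_le (g n : ℤ) (k : ℕ) : lg g (n + g ^ k) ≤ lg g n + 1 :=
  (lg_add_le g n _).trans (Nat.add_le_add_left (lg_le_one_of_mem (pow_mem_Ag g k)) _)

lemma exists_eq_add_mul_of_list {l : List ℤ} (hl : ∀ a ∈ l, a ∈ Ag g) :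
    ∃ d s : ℤ, l.sum = d + g * s ∧ d.natAbs + lg g s ≤ l.length := by
  induction l with
  | nil => exact ⟨0, 0, by simp, by simpa using lg_le_length (g := g) (l := []) (by simp)⟩
  | cons a t ih =>
    obtain ⟨d, s, hsum, hlen⟩ := ih fun b hb => hl b (List.mem_cons_of_mem a hb)
    simp only [List.sum_cons, List.length_cons]
    rcases eq_one_or_eq_neg_one_or_exists_eq_mul_of_mem_Ag (hl a List.mem_cons_self) with
      rfl | rfl | ⟨b, hb, rfl⟩
    · exact ⟨d + 1, s, by rw [hsum]; ring, by omega⟩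
    · exact ⟨d - 1, s, by rw [hsum]; ring, by omega⟩
    · refine ⟨d, s + b, by rw [hsum]; ring, ?_⟩
      have := (lg_add_le g s b).trans (Nat.add_le_add_left (lg_le_one_of_mem hb) _)
      omega

lemma exists_eq_add_mul_of_lg (g m : ℤ) :
    ∃ d s : ℤ, m = d + g * s ∧ d.natAbs + lg g s ≤ lg g m := by
  obtain ⟨l, hl, rfl, hlen⟩ := exists_list_length_eq_lg g m
  exact hlen ▸ exists_eq_add_mul_of_list hl

lemma lg_lt_lg_add_pow (hg : 2 ≤ g) {n : ℤ} {K : ℕ} (hK : n.natAbs < K) :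
    lg g n < lg g (n + g ^ K) := by
  induction K generalizing n with
  | zero => omega
  | succ K ih =>
    obtain ⟨d, s, hds, hlen⟩ := exists_eq_add_mul_of_lg g (n + g ^ (K + 1))
    set n' := s - g ^ K
    have hn : n = d + g * n' := by linear_combination hds
    have hlg_n : lg g n ≤ d.natAbs + lg g n' :=
      hn ▸ (lg_add_le g d _).trans (Nat.add_le_add (lg_le_natAbs g d) (lg_mul_le g n'))
    have hs : s = n' + g ^ K := by ring
    by_cases hn' : n'.natAbs < K
    · have : lg g n' < lg g s := hs ▸ ih hn'
      omega
    -- otherwise `g * n' = n - d` forces `|n| ≤ K ≤ |d|`, and strictness comes from `s`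
    have hgn' : g.natAbs * n'.natAbs ≤ n.natAbs + d.natAbs := by
      rw [← Int.natAbs_mul, show g * n' = n - d by omega]
      exact Int.natAbs_sub_le n d
    have hg' : 2 ≤ g.natAbs := by omega
    have hd : K ≤ d.natAbs := by nlinarith
    have hlg_le := lg_le_natAbs g n
    by_cases hs0 : s = 0
    · -- then `d = n + g ^ (K + 1)`, far larger than `|n| ≤ K`
      have hpow : 2 ^ K ≤ g.natAbs ^ K := Nat.pow_le_pow_left hg' K
      have hK_lt := Nat.lt_two_pow_self (n := K)
      have hn'_abs : n'.natAbs = g.natAbs ^ K := by simp [n', hs0, Int.natAbs_pow]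
      nlinarith
    · have hlg_s : lg g s ≠ 0 := mt (eq_zero_of_lg_eq_zero g s) hs0
      omega

end lg

theorem stmt13_general (g : ℤ) (hg : 2 ≤ g) (n : ℤ) :
    ∃ k : ℕ, lg g (n + g ^ k) = lg g n + 1 ∨ lg g (n - g ^ k) = lg g n + 1 :=
  ⟨n.natAbs + 1, Or.inl <| le_antisymm (lg_add_pow_le g n _)
    (lg_lt_lg_add_pow hg (Nat.lt_succ_self _))⟩

theorem stmt13 (g : ℤ) (hg : 2 ≤ g) (hge : Even g) (n : ℤ) :
    ∃ k : ℕ, lg g (n + g ^ k) = lg g n + 1 ∨ lg g (n - g ^ k) = lg g n + 1 :=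
  stmt13_general g hg n
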